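/- If a trace σ has an HB-race, then the trace-order-minimal HB-race (e1, e2) — minimal first in e2's trace position, then latest in e1's position — is a consecutive conflicting pair: there is no write event to the shared variable strictly between e1 and e2 in trace order. -/
import Mathlib


inductive Op : Type
  | read (x : ℕ)
  | write (x : ℕ)
  | acquire (l : ℕ)
  | release (l : ℕ)
  deriving DecidableEq

structure Event where
  tid : ℕ
  op : Op
  deriving DecidableEq

/-- A concurrent trace: a finite sequence of events, each with a thread id and an operation.
Events are identified with their positions `Fin N`; trace order is the order on `Fin N`. -/
structure Trace where
  N : ℕ
  tid : Fin N → ℕ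
  op : Fin N → Op

/-- Happens-before: the smallest (reflexive, transitive) order containing thread order and
ordering each release of a lock before every later (in trace order) acquire of that lock. -/
inductive HB (σ : Trace) : Fin σ.N → Fin σ.N → Prop
  | refl (i : Fin σ.N) : HB σ i i
  | thread {i j : Fin σ.N} : i < j → σ.tid i = σ.tid j → HB σ i j
  | relAcq {i j : Fin σ.N} (l : ℕ) : i < j → σ.op i = Op.release l → σ.op j = Op.acquire l →
      HB σ i j
  | trans {i j k : Fin σ.N} : HB σ i j → HB σ j k → HB σ i k

def accessesVar (σ : Trace) (e : Fin σ.N) (x : ℕ) : Prop :=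
  σ.op e = Op.read x ∨ σ.op e = Op.write x

/-- Two events conflict on variable `x`: different threads, both access `x`, at least one writes. -/
def Conflicting (σ : Trace) (x : ℕ) (e1 e2 : Fin σ.N) : Prop :=
  σ.tid e1 ≠ σ.tid e2 ∧ accessesVar σ e1 x ∧ accessesVar σ e2 x ∧
    (σ.op e1 = Op.write x ∨ σ.op e2 = Op.write x)

/-- Consecutive conflicting pair on `x`: conflicting, `e1` before `e2` in trace order, and no
write to `x` strictly between them. -/
def ConsecConf (σ : Trace) (x : ℕ) (e1 e2 : Fin σ.N) : Prop :=
  e1 < e2 ∧ Conflicting σ x e1 e2 ∧ ∀ f : Fin σ.N, e1 < f → f < e2 → σ.op f ≠ Op.write x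

/-- An HB-race on `x`: a conflicting pair, `e1` before `e2` in trace order, unordered by HB. -/
def HBRace (σ : Trace) (x : ℕ) (e1 e2 : Fin σ.N) : Prop :=
  e1 < e2 ∧ Conflicting σ x e1 e2 ∧ ¬ HB σ e1 e2 ∧ ¬ HB σ e2 e1


lemma hb_le {σ : Trace} {i j : Fin σ.N} (h : HB σ i j) : i ≤ j := by
  induction h with
  | refl => exact le_refl _
  | thread h _ => exact le_of_lt h
  | relAcq _ h _ _ => exact le_of_lt h
  | trans _ _ ih1 ih2 => exact le_trans ih1 ih2

/-- The trace-order-minimal HB-race (minimal first in the position of `e2`,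
then latest in the position of `e1`) is a consecutive conflicting pair: no write to the shared
variable lies strictly between `e1` and `e2` in trace order. -/
theorem minimal_hb_race_is_consecutive (σ : Trace) (x : ℕ) (e1 e2 : Fin σ.N)
    (hrace : HBRace σ x e1 e2)
    (hmin : ∀ (y : ℕ) (f1 f2 : Fin σ.N), HBRace σ y f1 f2 →
      e2 < f2 ∨ (e2 = f2 ∧ f1 ≤ e1)) :
    ¬ ∃ f : Fin σ.N, e1 < f ∧ f < e2 ∧ σ.op f = Op.write x := by
  rintro ⟨f, h1f, hf2, hw⟩
  obtain ⟨h12, ⟨htid, ha1, ha2, _⟩, hnhb, hnhb'⟩ := hrace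
  have hfx : accessesVar σ f x := Or.inr hw
  -- e1 HB f
  have hb1 : HB σ e1 f := by
    by_cases ht : σ.tid e1 = σ.tid f
    · exact HB.thread h1f ht
    · by_cases hr : HBRace σ x e1 f
      · rcases hmin x e1 f hr with h | ⟨h, _⟩
        · exact absurd (lt_trans h hf2) (lt_irrefl _)
        · exact absurd (h ▸ hf2) (lt_irrefl _)
      · by_cases hb : HB σ e1 f
        · exact hb
        · by_cases hb' : HB σ f e1
          · exact absurd (hb_le hb') (not_le.mpr h1f)
          · exact absurd ⟨h1f, ⟨ht, ha1, hfx, Or.inr hw⟩, hb, hb'⟩ hr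
  -- f HB e2
  have hb2 : HB σ f e2 := by
    by_cases ht : σ.tid f = σ.tid e2
    · exact HB.thread hf2 ht
    · by_cases hr : HBRace σ x f e2
      · rcases hmin x f e2 hr with h | ⟨_, h⟩
        · exact absurd h (lt_irrefl _)
        · exact absurd h (not_le.mpr h1f)
      · by_cases hb : HB σ f e2
        · exact hb
        · by_cases hb' : HB σ e2 f
          · exact absurd (hb_le hb') (not_le.mpr hf2)
          · exact absurd ⟨hf2, ⟨ht, hfx, ha2, Or.inl hw⟩, hb, hb'⟩ hr
  exact hnhb (HB.trans hb1 hb2)
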